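/- The bilinear pairing ⟨f,g⟩ = f_1 g_4 - (1/3) f_2 g_3 + (1/3) f_3 g_2 - f_4 g_1 on the space of binary cubic forms is invariant under the SL_2(R) action paired with its dual action: ⟨x, y⟩ = ⟨g·x, g^ι·y⟩ for g ∈ SL_2(R), where g^ι = J (g^{-1})^t J^{-1} with J the rotation by 90 degrees. -/
import Mathlib

open Matrix

/-- Action of a 2×2 matrix `g` on (the coefficient vector of) a binary cubic form,
`(g·f)(x,y) = f((x,y)g)`. -/
def cubicAct (g : Matrix (Fin 2) (Fin 2) ℝ) (f : Fin 4 → ℝ) : Fin 4 → ℝ :=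
  let a := f 0; let b := f 1; let c := f 2; let d := f 3
  let p := g 0 0; let q := g 0 1; let r := g 1 0; let s := g 1 1
  ![a * p ^ 3 + b * p ^ 2 * q + c * p * q ^ 2 + d * q ^ 3,
    3 * a * p ^ 2 * r + b * (p ^ 2 * s + 2 * p * q * r) + c * (q ^ 2 * r + 2 * p * q * s)
      + 3 * d * q ^ 2 * s,
    3 * a * p * r ^ 2 + b * (2 * p * r * s + q * r ^ 2) + c * (p * s ^ 2 + 2 * q * r * s)
      + 3 * d * q * s ^ 2,
    a * r ^ 3 + b * r ^ 2 * s + c * r * s ^ 2 + d * s ^ 3]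

/-- The bilinear pairing on binary cubic forms. -/
noncomputable def cubicPairing (f g : Fin 4 → ℝ) : ℝ :=
  f 0 * g 3 - (1 / 3) * f 1 * g 2 + (1 / 3) * f 2 * g 1 - f 3 * g 0

/-- The rotation by 90 degrees. -/
def Jmat : Matrix (Fin 2) (Fin 2) ℝ := !![0, 1; -1, 0]

/-- The pairing is invariant: `⟨x, y⟩ = ⟨g·x, g^ι·y⟩` for `g ∈ SL₂(ℝ)`,
where `g^ι = J (g⁻¹)ᵀ J⁻¹`. -/
theorem cubicPairing_invariant (g : Matrix (Fin 2) (Fin 2) ℝ) (hg : g.det = 1)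
    (x y : Fin 4 → ℝ) :
    cubicPairing x y = cubicPairing (cubicAct g x) (cubicAct (Jmat * (g⁻¹)ᵀ * Jmat⁻¹) y) := by
  have hinv : g⁻¹ = !![g 1 1, -(g 0 1); -(g 1 0), g 0 0] := by
    rw [Matrix.inv_def, hg, Matrix.adjugate_fin_two]
    simp
  have hJinv : Jmat⁻¹ = !![0, -1; 1, 0] := by
    apply Matrix.inv_eq_right_inv
    simp [Jmat, Matrix.mul_fin_two, Matrix.one_fin_two]
  have hT : (!![g 1 1, -(g 0 1); -(g 1 0), g 0 0])ᵀ
      = !![g 1 1, -(g 1 0); -(g 0 1), g 0 0] := by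
    ext i j
    fin_cases i <;> fin_cases j <;> simp
  have hgi : Jmat * (g⁻¹)ᵀ * Jmat⁻¹ = g := by
    rw [hinv, hJinv, hT]
    simp only [Jmat, Matrix.mul_fin_two]
    ext i j
    fin_cases i <;> fin_cases j <;> simp
  rw [hgi]
  have h : g 0 0 * g 1 1 - g 0 1 * g 1 0 = 1 := by
    rw [← Matrix.det_fin_two]; exact hg
  set p := g 0 0; set q := g 0 1; set r := g 1 0; set s := g 1 1
  set D := p * s - q * r with hD
  simp only [cubicPairing, cubicAct]
  simp only [Matrix.cons_val_zero, Matrix.cons_val_one, Matrix.head_cons,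
    Matrix.cons_val_two, Matrix.tail_cons, Matrix.cons_val_three]
  linear_combination (-(D ^ 2 + D + 1) *
    (x 0 * y 3 - (1 / 3) * x 1 * y 2 + (1 / 3) * x 2 * y 1 - x 3 * y 0)) * h
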